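/- Let N be a von Neumann algebra, H ∈ N a positive operator, and E the projection onto the closure of the range of H. Then the strong-operator closure of {HXH : X ∈ N} equals ENE. -/

import Mathlib

open TopologicalSpace

noncomputable section

namespace VNPaper

variable {H : Type*} [NormedAddCommGroup H] [InnerProductSpace ℂ H] [CompleteSpace H]

/-- A unitary operator on `H`. -/
def IsUnitaryOp (U : H →L[ℂ] H) : Prop := U * star U = 1 ∧ star U * U = 1

/-- Image of a set of operators under conjugation `x ↦ U x U*`. -/
def conjSet (U : H →L[ℂ] H) (S : Set (H →L[ℂ] H)) : Set (H →L[ℂ] H) :=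
  (fun x => U * x * star U) '' S

/-- `N` is singular in `M`: the only unitaries of `M` normalizing `N` lie in `N`. -/
def SingularIn (N M : Set (H →L[ℂ] H)) : Prop :=
  ∀ U ∈ M, IsUnitaryOp U → conjSet U N = N → U ∈ N

/-- The unitary normalizer of `N` in `M`. -/
def normalizerSet (N M : Set (H →L[ℂ] H)) : Set (H →L[ℂ] H) :=
  {U | U ∈ M ∧ IsUnitaryOp U ∧ conjSet U N = N}

/-- Partial isometry. -/
def IsPartialIsom (V : H →L[ℂ] H) : Prop := V * star V * V = V

/-- Projection (self-adjoint idempotent). -/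
def IsProjOp (p : H →L[ℂ] H) : Prop := IsSelfAdjoint p ∧ p * p = p

/-- Compression `E S E` of a set of operators. -/
def compress (E : H →L[ℂ] H) (S : Set (H →L[ℂ] H)) : Set (H →L[ℂ] H) :=
  (fun x => E * x * E) '' S

/-- The normalizing groupoid of `N` in `M`: partial isometries `V ∈ M` with initial and final
projections `E, F ∈ N` such that `V (E N E) V* = F N F`. -/
def groupoidSet (N M : Set (H →L[ℂ] H)) : Set (H →L[ℂ] H) :=
  {V | V ∈ M ∧ IsPartialIsom V ∧ star V * V ∈ N ∧ V * star V ∈ N ∧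
    conjSet V (compress (star V * V) N) = compress (V * star V) N}

/-- The von Neumann algebra generated by a set of operators (double commutant). -/
def gen (S : Set (H →L[ℂ] H)) : Set (H →L[ℂ] H) :=
  Set.centralizer (Set.centralizer S)

/-- `N` is regular in `M`: the normalizer of `N` in `M` generates `M`. -/
def RegularIn (N M : Set (H →L[ℂ] H)) : Prop :=
  gen (normalizerSet N M) = M

/-- The Hilbert space `ℓ²(ι, H) = H ⊗ ℓ²(ι)`. -/
abbrev l2 (ι : Type*) (H : Type*) [NormedAddCommGroup H] [InnerProductSpace ℂ H] :=
  lp (fun _ : ι => H) 2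

/-- The `(i,j)` matrix entry of an operator on `ℓ²(ι, H)`. -/
def entry {ι : Type*} (T : l2 ι H →L[ℂ] l2 ι H) (i j : ι) : H →L[ℂ] H :=
  letI : DecidableEq ι := Classical.decEq ι
  LinearMap.mkContinuous
    { toFun := fun h => T (lp.single 2 j h) i
      map_add' := fun a b => by
        have hs : lp.single (E := fun _ : ι => H) 2 j (a + b)
            = lp.single 2 j a + lp.single 2 j b := by
          apply lp.ext
          funext k
          by_cases hk : k = j
          · subst hk
            simp [lp.single_apply_self]
          · simp [lp.single_apply_ne _ _ _ hk]
        dsimp only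
        rw [hs, map_add]
        rfl
      map_smul' := fun c a => by
        dsimp only
        rw [show lp.single (E := fun _ : ι => H) 2 j (c • a) = c • lp.single 2 j a from
          lp.single_smul (E := fun _ : ι => H) 2 j c a, map_smul]
        rfl }
    ‖T‖
    (fun h => by
      calc ‖T (lp.single 2 j h) i‖ ≤ ‖T (lp.single 2 j h)‖ :=
            lp.norm_apply_le_norm (by norm_num) _ i
        _ ≤ ‖T‖ * ‖lp.single (E := fun _ : ι => H) 2 j h‖ := T.le_opNorm _
        _ = ‖T‖ * ‖h‖ := by
            rw [show ‖lp.single (E := fun _ : ι => H) 2 j h‖ = ‖h‖ from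
              lp.norm_single (E := fun _ : ι => H) (by norm_num) j h])

/-- The model of `S ⊗̄ B(ℓ²(ι))` inside `B(ℓ²(ι, H))`: operators all of whose matrix
entries lie in `S`. -/
def tensorB (S : Set (H →L[ℂ] H)) (ι : Type*) : Set (l2 ι H →L[ℂ] l2 ι H) :=
  {T | ∀ i j, entry T i j ∈ S}

/-- `N` is completely singular in `M`: `N ⊗̄ B(K)` is singular in `M ⊗̄ B(K)` for every
Hilbert space `K` (modelled as `ℓ²(ι)` over all index types `ι`). -/
def CompletelySingularIn (N M : Set (H →L[ℂ] H)) : Prop :=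
  ∀ ι : Type, SingularIn (tensorB N ι) (tensorB M ι)

/-- A finite von Neumann algebra: every isometry in it is a unitary. -/
def IsFiniteVN (M : Set (H →L[ℂ] H)) : Prop :=
  ∀ V ∈ M, star V * V = 1 → V * star V = 1

/-- A factor: trivial center. -/
def IsFactorVN (M : Set (H →L[ℂ] H)) : Prop :=
  ∀ x ∈ M, (∀ y ∈ M, x * y = y * x) → ∃ c : ℂ, x = c • (1 : H →L[ℂ] H)

/-- Abelian set of operators. -/
def IsAbelianSet (S : Set (H →L[ℂ] H)) : Prop :=
  ∀ x ∈ S, ∀ y ∈ S, x * y = y * x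

/-- A type II₁ factor: an infinite-dimensional finite factor. -/
def IsII1Factor (M : VonNeumannAlgebra H) : Prop :=
  IsFiniteVN (M : Set (H →L[ℂ] H)) ∧ IsFactorVN (M : Set (H →L[ℂ] H)) ∧
    ¬ ∃ (s : Finset (H →L[ℂ] H)), (↑s ⊆ (M : Set (H →L[ℂ] H))) ∧
        ∀ x ∈ (M : Set (H →L[ℂ] H)), x ∈ Submodule.span ℂ (↑s : Set (H →L[ℂ] H))

/-- Countably decomposable: every orthogonal family of nonzero projections is countable. -/
def CountablyDecomposable (N : Set (H →L[ℂ] H)) : Prop :=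
  ∀ S : Set (H →L[ℂ] H), (∀ p ∈ S, p ∈ N ∧ IsProjOp p ∧ p ≠ 0) →
    (S.Pairwise fun p q => p * q = 0) → S.Countable

/-- Properly infinite: every nonzero central projection `z` of `N` is infinite, i.e. `z` is
Murray–von Neumann equivalent in `N` to a proper subprojection of itself. -/
def ProperlyInfinite (N : Set (H →L[ℂ] H)) : Prop :=
  ∀ z ∈ N, IsProjOp z → z ≠ 0 → (∀ y ∈ N, z * y = y * z) →
    ∃ v ∈ N, star v * v = z ∧ z * v = v ∧ v * star v ≠ z

/-- Basic-neighbourhood description of the strong-operator closure of a set of operators. -/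
def sotClosure (S : Set (H →L[ℂ] H)) : Set (H →L[ℂ] H) :=
  {T | ∀ ε : ℝ, 0 < ε → ∀ F : Finset H, ∃ X ∈ S, ∀ h ∈ F, ‖(T - X) h‖ < ε}

/-- `E` is the projection onto the closure of the range of `A`: the smallest projection `p`
with `p A = A`. -/
def IsRangeProjOf (E A : H →L[ℂ] H) : Prop :=
  IsProjOp E ∧ E * A = A ∧ ∀ p, IsProjOp p → p * A = A → (p - E).IsPositive

/-- `A = V P` is the polar decomposition of `A`: `P = (A* A)^{1/2} ≥ 0`, `V` a partial isometry
whose initial projection `V* V` is the range projection of `P`. -/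
def IsPolarDecomp (A V P : H →L[ℂ] H) : Prop :=
  A = V * P ∧ P.IsPositive ∧ P * P = star A * A ∧ IsPartialIsom V ∧
    IsRangeProjOf (star V * V) P

/-- An injective von Neumann algebra: the range of a norm-one idempotent (conditional
expectation) on `B(H)`. -/
def IsInjectiveVN (B : Set (H →L[ℂ] H)) : Prop :=
  ∃ Φ : (H →L[ℂ] H) →L[ℂ] (H →L[ℂ] H), ‖Φ‖ ≤ 1 ∧ (∀ x, Φ x ∈ B) ∧ ∀ x ∈ B, Φ x = x

end VNPaper

/-- Data realizing the spatial tensor product of operators on `H₁` and `H₂` on a Hilbert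
space `HT`: commuting embeddings `x ↦ x ⊗ 1`, `y ↦ 1 ⊗ y`, satisfying the commutation
theorem for generated von Neumann algebras. -/
structure VNTensorData (H₁ : Type*) (H₂ : Type*) (HT : Type*)
    [NormedAddCommGroup H₁] [InnerProductSpace ℂ H₁] [CompleteSpace H₁]
    [NormedAddCommGroup H₂] [InnerProductSpace ℂ H₂] [CompleteSpace H₂]
    [NormedAddCommGroup HT] [InnerProductSpace ℂ HT] [CompleteSpace HT] where
  e₁ : (H₁ →L[ℂ] H₁) →⋆ₐ[ℂ] (HT →L[ℂ] HT)
  e₂ : (H₂ →L[ℂ] H₂) →⋆ₐ[ℂ] (HT →L[ℂ] HT)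
  injective_e₁ : Function.Injective e₁
  injective_e₂ : Function.Injective e₂
  commute : ∀ x y, e₁ x * e₂ y = e₂ y * e₁ x
  commutation : ∀ (S₁ : Set (H₁ →L[ℂ] H₁)) (S₂ : Set (H₂ →L[ℂ] H₂)),
    Set.centralizer (e₁ '' S₁ ∪ e₂ '' S₂) =
      VNPaper.gen (e₁ '' Set.centralizer S₁ ∪ e₂ '' Set.centralizer S₂)

namespace VNTensorData

variable {H₁ H₂ HT : Type*}
    [NormedAddCommGroup H₁] [InnerProductSpace ℂ H₁] [CompleteSpace H₁]
    [NormedAddCommGroup H₂] [InnerProductSpace ℂ H₂] [CompleteSpace H₂]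
    [NormedAddCommGroup HT] [InnerProductSpace ℂ HT] [CompleteSpace HT]

/-- The von Neumann tensor product `S₁ ⊗̄ S₂` realized on `HT`. -/
def prod (D : VNTensorData H₁ H₂ HT) (S₁ : Set (H₁ →L[ℂ] H₁)) (S₂ : Set (H₂ →L[ℂ] H₂)) :
    Set (HT →L[ℂ] HT) :=
  VNPaper.gen (D.e₁ '' S₁ ∪ D.e₂ '' S₂)

end VNTensorData

/-!
Every `A X A` lies in `N` and is fixed by `X ↦ E X E`; both properties pass to strong limits
(`N` is its own bicommutant), so the closure lies in `E N E`. Conversely, with `g_c` a regularized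
inverse of `t`, the operators `T_c = A g_c(A)` are contractions vanishing on `ker A` with
`‖T_c A - A‖ ≤ 1 / (2c)`. By equicontinuity they converge strongly to `E` on `closure (range A)`,
hence everywhere, and so `A (g_c(A) X g_c(A)) A = T_c X T_c → E X E` strongly for `X ∈ N`.
-/

open Filter Topology

namespace VNPaper

variable {H : Type*} [NormedAddCommGroup H] [InnerProductSpace ℂ H]

theorem mul_mul_eq_of_mem_sotClosure {S : Set (H →L[ℂ] H)} {a b c d : H →L[ℂ] H}
    (hS : ∀ X ∈ S, a * X * b = c * X * d) {T : H →L[ℂ] H} (hT : T ∈ sotClosure S) :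
    a * T * b = c * T * d := by
  classical
  ext v
  refine eq_of_forall_dist_le fun ε hε => ?_
  obtain ⟨X, hX, hXT⟩ := hT (ε / (‖a‖ + ‖c‖ + 1)) (by positivity) {b v, d v}
  have hb := (hXT (b v) (by simp)).le
  have hd := (hXT (d v) (by simp)).le
  have hsplit : (a * T * b) v - (c * T * d) v = a ((T - X) (b v)) - c ((T - X) (d v)) := by
    have hX' := congr($(hS X hX) v)
    simp only [mul_apply_eq_comp] at hX' ⊢
    simp only [sub_apply, map_sub, hX']
    abel
  calc dist ((a * T * b) v) ((c * T * d) v)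
      = ‖a ((T - X) (b v)) - c ((T - X) (d v))‖ := by rw [dist_eq_norm, hsplit]
    _ ≤ ‖a‖ * ‖(T - X) (b v)‖ + ‖c‖ * ‖(T - X) (d v)‖ :=
        (norm_sub_le _ _).trans (add_le_add (a.le_opNorm _) (c.le_opNorm _))
    _ ≤ (‖a‖ + ‖c‖ + 1) * (ε / (‖a‖ + ‖c‖ + 1)) := by
        have hδ : 0 < ε / (‖a‖ + ‖c‖ + 1) := by positivity
        nlinarith [norm_nonneg a, norm_nonneg c, mul_le_mul_of_nonneg_left hb (norm_nonneg a),
          mul_le_mul_of_nonneg_left hd (norm_nonneg c)]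
    _ = ε := mul_div_cancel₀ _ (by positivity)

theorem mem_sotClosure_of_tendsto {ι : Type*} {l : Filter ι} [l.NeBot]
    {F : ι → H →L[ℂ] H} {S : Set (H →L[ℂ] H)} (hFS : ∀ᶠ i in l, F i ∈ S) {T : H →L[ℂ] H}
    (hFT : ∀ v, Tendsto (fun i => F i v) l (𝓝 (T v))) : T ∈ sotClosure S := by
  intro ε hε K
  have hK : ∀ᶠ i in l, ∀ v ∈ K, ‖(T - F i) v‖ < ε :=
    (eventually_all_finset K).2 fun v _ => by
      simpa [dist_eq_norm'] using (hFT v).eventually (Metric.ball_mem_nhds _ hε)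
  obtain ⟨i, hiS, hi⟩ := (hFS.and hK).exists
  exact ⟨F i, hiS, hi⟩

theorem tendsto_mul_mul_apply {ι : Type*} {l : Filter ι} {P Q : ι → H →L[ℂ] H}
    {P₀ Q₀ : H →L[ℂ] H} {C : ℝ} (hPC : ∀ i, ‖P i‖ ≤ C)
    (hP : ∀ v, Tendsto (fun i => P i v) l (𝓝 (P₀ v)))
    (hQ : ∀ v, Tendsto (fun i => Q i v) l (𝓝 (Q₀ v))) (X : H →L[ℂ] H) (v : H) :
    Tendsto (fun i => (P i * X * Q i) v) l (𝓝 ((P₀ * X * Q₀) v)) := by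
  have hsplit : ∀ i, (P i * X * Q i) v
      = P i (X (Q i v - Q₀ v)) + P i (X (Q₀ v)) := fun i => by
    simp only [mul_apply_eq_comp, map_sub, sub_add_cancel]
  have hfirst : Tendsto (fun i => P i (X (Q i v - Q₀ v))) l (𝓝 0) := by
    refine squeeze_zero_norm (fun i => ?_)
      (by simpa using ((hQ v).sub_const (Q₀ v)).norm.const_mul (C * ‖X‖))
    calc ‖P i (X (Q i v - Q₀ v))‖ ≤ ‖P i‖ * (‖X‖ * ‖Q i v - Q₀ v‖) :=
          ((P i).le_opNorm _).trans (by gcongr; exact X.le_opNorm _)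
      _ ≤ C * ‖X‖ * ‖Q i v - Q₀ v‖ := by
          rw [← mul_assoc]; gcongr; exact hPC i
  simpa [hsplit, mul_apply_eq_comp] using hfirst.add (hP (X (Q₀ v)))

variable [CompleteSpace H]

theorem sotClosure_subset_of_subset {N : VonNeumannAlgebra H} {S : Set (H →L[ℂ] H)}
    (hS : S ⊆ N) : sotClosure S ⊆ N := by
  intro T hT
  rw [← N.centralizer_centralizer]
  refine Set.mem_centralizer_iff.2 fun y hy => ?_
  simpa using mul_mul_eq_of_mem_sotClosure (a := y) (b := 1) (c := 1) (d := y)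
    (fun X hX => by simpa using (Set.mem_centralizer_iff.1 hy X (hS hX)).symm) hT

theorem cfc_mem_vonNeumannAlgebra (N : VonNeumannAlgebra H) {A : H →L[ℂ] H} (hA : A ∈ N)
    (f : ℝ → ℝ) : cfc f A ∈ N := by
  have hN : IsClosed (N.toStarSubalgebra : Set (H →L[ℂ] H)) := by
    change IsClosed (N : Set (H →L[ℂ] H))
    rw [← N.centralizer_centralizer]
    exact Set.isClosed_centralizer _
  exact cfc_mem (𝕜' := ℂ) (s := N.toStarSubalgebra) (hs := hN) f hA

namespace IsRangeProjOf

variable {A E : H →L[ℂ] H}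

theorem isStarProjection (hE : IsRangeProjOf E A) : IsStarProjection E :=
  ⟨hE.1.2, hE.1.1⟩

theorem mul_right_eq (hE : IsRangeProjOf E A) (hA : IsSelfAdjoint A) : A * E = A := by
  simpa [hA.star_eq, hE.1.1.star_eq] using congr(star $(hE.2.1))

theorem apply_mem_closure_range (hE : IsRangeProjOf E A) (v : H) :
    E v ∈ closure (Set.range A) := by
  set K := (LinearMap.range (A : H →ₗ[ℂ] H)).topologicalClosure
  have hP : IsStarProjection K.starProjection := isStarProjection_starProjection
  have hPA : K.starProjection * A = A := by
    ext u
    exact K.starProjection_eq_self_iff.2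
      (Submodule.le_topologicalClosure _ (LinearMap.mem_range_self _ u))
  have hEP : E ≤ K.starProjection := hE.2.2 _ ⟨hP.isSelfAdjoint, hP.isIdempotentElem⟩ hPA
  have hPE : K.starProjection * E = E :=
    (hP.mul_right_and_mul_left_of_nonneg_of_le hE.isStarProjection.nonneg hEP).2
  have hEv : E v ∈ K := by
    rw [← hPE]
    exact K.starProjection_apply_mem _
  rwa [← SetLike.mem_coe, Submodule.topologicalClosure_coe, LinearMap.coe_range,
    ContinuousLinearMap.coe_coe] at hEv

theorem tendsto_apply {ι : Type*} {l : Filter ι} {T : ι → H →L[ℂ] H} {C : ℝ}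
    (hE : IsRangeProjOf E A) (hA : IsSelfAdjoint A) (hTC : ∀ i, ‖T i‖ ≤ C)
    (hker : ∀ i v, A v = 0 → T i v = 0)
    (hran : ∀ u, Tendsto (fun i => T i (A u)) l (𝓝 (A u))) (v : H) :
    Tendsto (fun i => T i v) l (𝓝 (E v)) := by
  have hequi : Equicontinuous ((↑) ∘ T : ι → H → H) :=
    (show (∃ C, ∀ i, ‖T i‖ ≤ C) ↔ _ from (NormedSpace.equicontinuous_TFAE T).out 5 1).1
      ⟨C, hTC⟩
  have hEv : Tendsto (fun i => T i (E v)) l (𝓝 (E v)) :=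
    closure_minimal (by rintro _ ⟨u, rfl⟩; exact hran u)
      (hequi.isClosed_setOfPred_tendsto continuous_id) (hE.apply_mem_closure_range v)
  have hAv : A (v - E v) = 0 := by
    rw [map_sub, ← mul_apply_eq_comp, hE.mul_right_eq hA, sub_self]
  refine hEv.congr fun i => ?_
  have hTi := hker i _ hAv
  rw [map_sub, sub_eq_zero] at hTi
  exact hTi.symm

end IsRangeProjOf

-- `t / (t ^ 2 + c⁻²)`, a Tikhonov-regularized inverse of `t`
def regInv (c t : ℝ) : ℝ := c ^ 2 * t / (1 + c ^ 2 * t ^ 2)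

@[fun_prop]
theorem continuous_regInv (c : ℝ) : Continuous (regInv c) :=
  Continuous.div (by fun_prop) (by fun_prop) fun t => by positivity

theorem abs_mul_regInv_le_one (c t : ℝ) : |t * regInv c t| ≤ 1 := by
  have hd : 0 < 1 + c ^ 2 * t ^ 2 := by positivity
  have heq : t * regInv c t = c ^ 2 * t ^ 2 / (1 + c ^ 2 * t ^ 2) := by
    unfold regInv; ring
  rw [heq, abs_of_nonneg (by positivity), div_le_one hd]
  linarith

theorem abs_mul_regInv_mul_sub_le {c : ℝ} (hc : 0 < c) (t : ℝ) :
    |t * regInv c t * t - t| ≤ 1 / (2 * c) := by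
  have hd : 0 < 1 + c ^ 2 * t ^ 2 := by positivity
  have heq : t * regInv c t * t - t = -t / (1 + c ^ 2 * t ^ 2) := by
    unfold regInv; field_simp; ring
  rw [heq, abs_div, abs_neg, abs_of_pos hd, div_le_div_iff₀ hd (by positivity)]
  nlinarith [sq_nonneg (1 - c * |t|), sq_abs t]

variable {𝒜 : Type*} [CStarAlgebra 𝒜] {a : 𝒜}

theorem commute_cfc_regInv (ha : IsSelfAdjoint a) (c : ℝ) : Commute a (cfc (regInv c) a) := by
  simpa [cfc_id' ℝ a ha] using cfc_commute_cfc (fun t : ℝ => t) (regInv c) a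

theorem norm_mul_cfc_regInv_le_one (ha : IsSelfAdjoint a) (c : ℝ) :
    ‖a * cfc (regInv c) a‖ ≤ 1 := by
  have h : cfc (fun t => t * regInv c t) a = a * cfc (regInv c) a := by
    rw [cfc_mul _ _ a, cfc_id' ℝ a ha]
  rw [← h]
  exact norm_cfc_le zero_le_one fun t _ => by
    simpa [Real.norm_eq_abs] using abs_mul_regInv_le_one c t

theorem norm_mul_cfc_regInv_mul_sub_le (ha : IsSelfAdjoint a) {c : ℝ} (hc : 0 < c) :
    ‖a * cfc (regInv c) a * a - a‖ ≤ 1 / (2 * c) := by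
  have h : cfc (fun t => t * regInv c t * t - t) a = a * cfc (regInv c) a * a - a := by
    rw [cfc_sub _ _ a, cfc_mul _ _ a, cfc_mul _ _ a, cfc_id' ℝ a ha]
  rw [← h]
  exact norm_cfc_le (by positivity) fun t _ => by
    simpa [Real.norm_eq_abs] using abs_mul_regInv_mul_sub_le hc t

theorem tendsto_mul_cfc_regInv_apply {A E : H →L[ℂ] H} (hA : IsSelfAdjoint A)
    (hE : IsRangeProjOf E A) (v : H) :
    Tendsto (fun c : ℝ => (A * cfc (regInv c) A) v) atTop (𝓝 (E v)) := by
  refine hE.tendsto_apply hA (norm_mul_cfc_regInv_le_one hA) (fun c w hw => ?_) (fun u => ?_) v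
  · rw [(commute_cfc_regInv hA c).eq, mul_apply_eq_comp, hw, map_zero]
  rw [tendsto_iff_norm_sub_tendsto_zero]
  refine squeeze_zero' (.of_forall fun _ => norm_nonneg _) ?_
    (tendsto_const_nhds.div_atTop (tendsto_id.const_mul_atTop two_pos) : Tendsto
      (fun c : ℝ => ‖u‖ / (2 * c)) atTop (𝓝 0))
  filter_upwards [eventually_gt_atTop 0] with c hc
  calc ‖(A * cfc (regInv c) A) (A u) - A u‖ = ‖(A * cfc (regInv c) A * A - A) u‖ := rfl
    _ ≤ ‖A * cfc (regInv c) A * A - A‖ * ‖u‖ := ContinuousLinearMap.le_opNorm _ _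
    _ ≤ 1 / (2 * c) * ‖u‖ := by gcongr; exact norm_mul_cfc_regInv_mul_sub_le hA hc
    _ = ‖u‖ / (2 * c) := by ring

end VNPaper

open VNPaper

variable {H : Type*} [NormedAddCommGroup H] [InnerProductSpace ℂ H] [CompleteSpace H]

/-- For a positive `A ∈ N` with range projection `E`, the strong-operator closure of
`{A X A : X ∈ N}` is `E N E`. -/
theorem sotClosure_sandwich (N : VonNeumannAlgebra H)
    (A : H →L[ℂ] H) (hA : A ∈ N) (hpos : A.IsPositive)
    (E : H →L[ℂ] H) (hE : IsRangeProjOf E A) :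
    sotClosure ((fun X => A * X * A) '' (N : Set (H →L[ℂ] H)))
      = compress E (N : Set (H →L[ℂ] H)) := by
  have hsa : IsSelfAdjoint A := hpos.isSelfAdjoint
  apply subset_antisymm
  · intro T hT
    refine ⟨T, sotClosure_subset_of_subset ?_ hT, ?_⟩
    · rintro _ ⟨X, hX, rfl⟩
      exact mul_mem (mul_mem hA hX) hA
    simpa using mul_mul_eq_of_mem_sotClosure (a := E) (b := E) (c := 1) (d := 1) (by
      rintro _ ⟨X, -, rfl⟩
      rw [one_mul, mul_one, ← mul_assoc, ← mul_assoc, hE.2.1, mul_assoc, hE.mul_right_eq hsa]) hT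
  · rintro _ ⟨X, hX, rfl⟩
    let G : ℝ → H →L[ℂ] H := fun c => cfc (regInv c) A
    refine mem_sotClosure_of_tendsto (l := atTop) (F := fun c => A * G c * X * (A * G c))
      (.of_forall fun c => ?_) (tendsto_mul_mul_apply (norm_mul_cfc_regInv_le_one hsa)
        (tendsto_mul_cfc_regInv_apply hsa hE) (tendsto_mul_cfc_regInv_apply hsa hE) X)
    have hG := cfc_mem_vonNeumannAlgebra N hA (regInv c)
    refine ⟨G c * X * G c, mul_mem (mul_mem hG hX) hG, ?_⟩
    simp only [G, mul_assoc]
    rw [(commute_cfc_regInv hsa c).eq]
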